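/- Let n ≥ 1 be an integer, q > n, s ∈ (0,1), and let f(x) = (1+|x|²)^{−q/2}. Then there exists a constant C > 0 such that for every x ∈ ℝⁿ the integral I_s f(x) converges absolutely and |I_s f(x)| ≤ C (1+|x|²)^{−(n+2s)/2}. -/

import Mathlib

/-!
Split the integral at `‖y‖ = ⟨x⟩ / 2`, where `⟨x⟩ = √(1 + ‖x‖²)` and `f = ⟨·⟩ ^ (-q)`.

Near the origin the whole segment `x + [-1, 1] y` stays at bracket `≥ ⟨x⟩ / 2`, so the mean value
theorem applied twice bounds the second difference by `‖y‖² ⟨x⟩ ^ (-q - 2)`; integrating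
`‖y‖ ^ (2 - n - 2s)` over the ball (in polar coordinates) contributes `⟨x⟩ ^ (-q - 2s)`.

Away from the origin the three terms are estimated separately: the translates `f (x ± y)` have
total mass `2 ‖f‖₁` and come with the factor `(⟨x⟩ / 2) ^ (-n - 2s)`, while `2 f x = 2 ⟨x⟩ ^ (-q)`
multiplies the tail `∫_{‖y‖ > ⟨x⟩/2} ‖y‖ ^ (-n - 2s) ∼ ⟨x⟩ ^ (-2s)`. Since `q > n`, every
contribution is `O(⟨x⟩ ^ (-n - 2s))`.
-/

open MeasureTheory Metric Set Module
open scoped RealInnerProductSpace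

def secondDiff {E : Type*} [AddGroup E] (f : E → ℝ) (x y : E) : ℝ :=
  f (x + y) - 2 * f x + f (x - y)

noncomputable def singularIntegrand {E : Type*} [NormedAddCommGroup E] [NormedSpace ℝ E]
    (f : E → ℝ) (s : ℝ) (x y : E) : ℝ :=
  secondDiff f x y / ‖y‖ ^ ((finrank ℝ E : ℝ) + 2 * s)

lemma pow_sub_one_mul_rpow {d : ℕ} (hd : 1 ≤ d) {t : ℝ} (ht : 0 < t) (a : ℝ) :
    t ^ (d - 1) * t ^ a = t ^ ((d : ℝ) + a - 1) := by
  rw [← Real.rpow_natCast, ← Real.rpow_add ht, Nat.cast_sub hd]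
  ring_nf

lemma div_two_rpow {m : ℝ} (hm : 0 < m) (e : ℝ) : (m / 2) ^ e = 2 ^ (-e) * m ^ e := by
  rw [Real.div_rpow hm.le zero_le_two, Real.rpow_neg zero_le_two, div_eq_inv_mul]

lemma indicator_preimage_norm_rpow {E : Type*} [Norm E] (S : Set ℝ) (a : ℝ) :
    (norm ⁻¹' S).indicator (fun y : E => ‖y‖ ^ a) = fun y => S.indicator (· ^ a) ‖y‖ :=
  funext fun _ => indicator_comp_right (g := fun t : ℝ => t ^ a) norm

lemma closedBall_zero_eq_preimage_norm {E : Type*} [SeminormedAddCommGroup E] (r : ℝ) :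
    closedBall (0 : E) r = norm ⁻¹' Iic r := by
  ext; simp

lemma continuous_one_add_norm_sq_rpow {E : Type*} [SeminormedAddCommGroup E] (q : ℝ) :
    Continuous fun z : E => (1 + ‖z‖ ^ 2) ^ (-q / 2) :=
  (continuous_const.add (continuous_norm.pow 2)).rpow_const
    fun z => Or.inl (by positivity : (0 : ℝ) < 1 + ‖z‖ ^ 2).ne'

lemma one_add_norm_sq_le_four_mul {E : Type*} [SeminormedAddCommGroup E] {x v : E}
    (hv : 4 * ‖v‖ ^ 2 ≤ 1 + ‖x‖ ^ 2) : 1 + ‖x‖ ^ 2 ≤ 4 * (1 + ‖x + v‖ ^ 2) := by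
  have h : ‖x‖ ≤ ‖x + v‖ + ‖v‖ := by simpa using norm_sub_le (x + v) v
  nlinarith [norm_nonneg x, norm_nonneg v, sq_nonneg (‖x + v‖ - ‖v‖)]

lemma abs_secondDiff_le_of_nonneg {E : Type*} [AddGroup E] {f : E → ℝ} (hf : ∀ z, 0 ≤ f z)
    (x y : E) : |secondDiff f x y| ≤ f (x + y) + f (x - y) + 2 * f x := by
  have := hf x; have := hf (x + y); have := hf (x - y)
  rw [secondDiff, abs_le]; constructor <;> linarith

lemma integrableOn_and_setIntegral_abs_le_of_abs_le {α : Type*} [MeasurableSpace α]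
    {μ : Measure α} {f g : α → ℝ} {s : Set α} (hs : MeasurableSet s)
    (hf : AEStronglyMeasurable f μ) (hg : IntegrableOn g s μ) (hfg : ∀ y ∈ s, |f y| ≤ g y) :
    IntegrableOn f s μ ∧ ∫ y in s, |f y| ∂μ ≤ ∫ y in s, g y ∂μ := by
  have hfi : IntegrableOn f s μ :=
    hg.mono' hf.restrict (ae_restrict_of_forall_mem hs fun y hy => (hfg y hy).trans_eq' rfl)
  exact ⟨hfi, setIntegral_mono_on hfi.abs hg hs hfg⟩

section Radial

variable {E : Type*} [NormedAddCommGroup E] [NormedSpace ℝ E] [FiniteDimensional ℝ E]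
  [Nontrivial E]

lemma eqOn_pow_finrank_sub_one_smul_indicator_rpow (S : Set ℝ) (a : ℝ) :
    EqOn (fun t : ℝ => t ^ (finrank ℝ E - 1) • S.indicator (· ^ a) t)
      (S.indicator fun t => t ^ ((finrank ℝ E : ℝ) + a - 1)) (Ioi 0) := by
  intro t ht
  by_cases htS : t ∈ S
  · simp only [indicator_of_mem htS, smul_eq_mul]
    exact pow_sub_one_mul_rpow finrank_pos ht a
  · simp [indicator_of_notMem htS]

variable [MeasurableSpace E] [BorelSpace E] (μ : Measure E) [μ.IsAddHaarMeasure]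

lemma integrableOn_preimage_norm_rpow_iff {S : Set ℝ} (hS : MeasurableSet S) (a : ℝ) :
    IntegrableOn (fun y : E => ‖y‖ ^ a) (norm ⁻¹' S) μ ↔
      IntegrableOn (fun t : ℝ => t ^ ((finrank ℝ E : ℝ) + a - 1)) (S ∩ Ioi 0) := by
  rw [← integrable_indicator_iff (measurableSet_preimage measurable_norm hS),
    indicator_preimage_norm_rpow, integrable_fun_norm_addHaar,
    integrableOn_congr_fun (eqOn_pow_finrank_sub_one_smul_indicator_rpow S a) measurableSet_Ioi,
    IntegrableOn, integrable_indicator_iff hS, IntegrableOn, Measure.restrict_restrict hS]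
  rfl

lemma setIntegral_preimage_norm_rpow {S : Set ℝ} (hS : MeasurableSet S) (a : ℝ) :
    ∫ y in norm ⁻¹' S, ‖y‖ ^ a ∂μ = finrank ℝ E * μ.real (ball 0 1) *
      ∫ t in S ∩ Ioi 0, t ^ ((finrank ℝ E : ℝ) + a - 1) := by
  rw [← integral_indicator (measurableSet_preimage measurable_norm hS),
    indicator_preimage_norm_rpow, integral_fun_norm_addHaar,
    setIntegral_congr_fun measurableSet_Ioi (eqOn_pow_finrank_sub_one_smul_indicator_rpow S a),
    setIntegral_indicator hS, nsmul_eq_mul, smul_eq_mul, mul_assoc, inter_comm]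

variable {μ} {a r : ℝ}

lemma integrableOn_closedBall_norm_rpow (ha : -(finrank ℝ E : ℝ) < a) (r : ℝ) :
    IntegrableOn (fun y : E => ‖y‖ ^ a) (closedBall 0 r) μ := by
  rw [closedBall_zero_eq_preimage_norm, integrableOn_preimage_norm_rpow_iff μ measurableSet_Iic,
    Iic_inter_Ioi]
  rcases le_or_gt 0 r with hr | hr
  · exact (intervalIntegral.intervalIntegrable_rpow' (by linarith)).1
  · simp [Ioc_eq_empty_of_le hr.le]

lemma setIntegral_closedBall_norm_rpow (ha : -(finrank ℝ E : ℝ) < a) (hr : 0 ≤ r) :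
    ∫ y in closedBall 0 r, ‖y‖ ^ a ∂μ = finrank ℝ E * μ.real (ball 0 1) *
      (r ^ ((finrank ℝ E : ℝ) + a) / ((finrank ℝ E : ℝ) + a)) := by
  rw [closedBall_zero_eq_preimage_norm, setIntegral_preimage_norm_rpow μ measurableSet_Iic,
    Iic_inter_Ioi, ← intervalIntegral.integral_of_le hr, integral_rpow (Or.inl (by linarith)),
    sub_add_cancel, Real.zero_rpow (by linarith), sub_zero]

lemma integrableOn_compl_closedBall_norm_rpow (ha : a < -(finrank ℝ E : ℝ)) (hr : 0 < r) :
    IntegrableOn (fun y : E => ‖y‖ ^ a) (closedBall 0 r)ᶜ μ := by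
  rw [closedBall_zero_eq_preimage_norm, ← preimage_compl, compl_Iic,
    integrableOn_preimage_norm_rpow_iff μ measurableSet_Ioi, Ioi_inter_Ioi, max_eq_left hr.le]
  exact integrableOn_Ioi_rpow_of_lt (by linarith) hr

lemma setIntegral_compl_closedBall_norm_rpow (ha : a < -(finrank ℝ E : ℝ)) (hr : 0 < r) :
    ∫ y in (closedBall 0 r)ᶜ, ‖y‖ ^ a ∂μ = finrank ℝ E * μ.real (ball 0 1) *
      (-r ^ ((finrank ℝ E : ℝ) + a) / ((finrank ℝ E : ℝ) + a)) := by
  rw [closedBall_zero_eq_preimage_norm, ← preimage_compl, compl_Iic,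
    setIntegral_preimage_norm_rpow μ measurableSet_Ioi, Ioi_inter_Ioi, max_eq_left hr.le,
    integral_Ioi_rpow_of_lt (by linarith) hr, sub_add_cancel]

end Radial

lemma abs_secondDiff_le_of_hasDerivAt {g g' g'' : ℝ → ℝ} {M : ℝ}
    (hg : ∀ t, HasDerivAt g (g' t) t) (hg' : ∀ t, HasDerivAt g' (g'' t) t)
    (hM : ∀ t ∈ Icc (-1 : ℝ) 1, |g'' t| ≤ M) :
    |secondDiff g 0 1| ≤ 2 * M := by
  have hodd : ∀ t ∈ Icc (0 : ℝ) 1, ‖g' t - g' (-t)‖ ≤ 2 * M := fun t ht => by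
    have h := (convex_Icc (-1 : ℝ) 1).norm_image_sub_le_of_norm_hasDerivWithin_le
      (fun u _ => (hg' u).hasDerivWithinAt) (fun u hu => (hM u hu).trans_eq' rfl)
      (x := -t) (y := t) ⟨by linarith [ht.2], by linarith [ht.1]⟩ ⟨by linarith [ht.1], ht.2⟩
    have hM0 : 0 ≤ M := (abs_nonneg _).trans (hM 0 ⟨by norm_num, by norm_num⟩)
    calc ‖g' t - g' (-t)‖ ≤ M * ‖t - -t‖ := h
      _ ≤ M * 2 := by
        gcongr
        rw [Real.norm_eq_abs, abs_le]; constructor <;> linarith [ht.1, ht.2]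
      _ = 2 * M := mul_comm _ _
  have heven : ∀ t, HasDerivAt (fun u => g u + g (-u)) (g' t - g' (-t)) t := fun t => by
    have h := (hg t).add ((hg (-t)).comp t (hasDerivAt_neg t))
    rw [mul_neg_one, ← sub_eq_add_neg] at h
    exact h
  have h := (convex_Icc (0 : ℝ) 1).norm_image_sub_le_of_norm_hasDerivWithin_le
    (fun u _ => (heven u).hasDerivWithinAt) hodd (left_mem_Icc.2 zero_le_one)
    (right_mem_Icc.2 zero_le_one)
  simp only [neg_zero, sub_zero, norm_one, mul_one, Real.norm_eq_abs] at h
  calc |secondDiff g 0 1| = |g 1 + g (-1) - (g 0 + g 0)| := by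
        rw [secondDiff, zero_add, zero_sub]; ring_nf
    _ ≤ 2 * M := h

section JapaneseBracket

variable {E : Type*} [NormedAddCommGroup E] [InnerProductSpace ℝ E] {q s : ℝ}

lemma hasDerivAt_add_smul (z v : E) (t : ℝ) : HasDerivAt (fun t : ℝ => z + t • v) v t := by
  simpa using ((hasDerivAt_id t).smul_const v).const_add z

lemma hasDerivAt_inner_add_smul (z v : E) (t : ℝ) :
    HasDerivAt (fun t : ℝ => ⟪z + t • v, v⟫) (‖v‖ ^ 2) t := by
  simpa [real_inner_self_eq_norm_sq] using
    (hasDerivAt_add_smul z v t).inner ℝ (hasDerivAt_const t v)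

lemma hasDerivAt_one_add_norm_add_smul_sq_rpow (z v : E) (b t : ℝ) :
    HasDerivAt (fun t : ℝ => (1 + ‖z + t • v‖ ^ 2) ^ b)
      (2 * b * (⟪z + t • v, v⟫ * (1 + ‖z + t • v‖ ^ 2) ^ (b - 1))) t := by
  convert ((hasDerivAt_add_smul z v t).norm_sq.const_add 1).rpow_const (p := b)
    (Or.inl (by positivity)) using 1
  ring

lemma abs_second_deriv_one_add_norm_sq_rpow_le (hq : 0 ≤ q) (w v : E) :
    |q * (q + 2) * ⟪w, v⟫ ^ 2 * (1 + ‖w‖ ^ 2) ^ (-q / 2 - 2)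
        - q * ‖v‖ ^ 2 * (1 + ‖w‖ ^ 2) ^ (-q / 2 - 1)|
      ≤ q * (q + 3) * ‖v‖ ^ 2 * (1 + ‖w‖ ^ 2) ^ (-q / 2 - 1) := by
  set P := 1 + ‖w‖ ^ 2
  have hP0 : 0 < P := by positivity
  have hinner : ⟪w, v⟫ ^ 2 ≤ P * ‖v‖ ^ 2 := by
    calc ⟪w, v⟫ ^ 2 = |⟪w, v⟫| ^ 2 := (sq_abs _).symm
      _ ≤ (‖w‖ * ‖v‖) ^ 2 := by gcongr; exact abs_real_inner_le_norm w v
      _ ≤ P * ‖v‖ ^ 2 := by rw [mul_pow]; gcongr; linarith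
  have hfirst : q * (q + 2) * ⟪w, v⟫ ^ 2 * P ^ (-q / 2 - 2)
      ≤ q * (q + 2) * ‖v‖ ^ 2 * P ^ (-q / 2 - 1) := by
    calc q * (q + 2) * ⟪w, v⟫ ^ 2 * P ^ (-q / 2 - 2)
        ≤ q * (q + 2) * (P * ‖v‖ ^ 2) * P ^ (-q / 2 - 2) := by gcongr
      _ = q * (q + 2) * ‖v‖ ^ 2 * (P ^ (-q / 2 - 2) * P) := by ring
      _ = q * (q + 2) * ‖v‖ ^ 2 * P ^ (-q / 2 - 1) := by
        rw [← Real.rpow_add_one hP0.ne']; ring_nf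
  have h₁ : 0 ≤ q * (q + 2) * ⟪w, v⟫ ^ 2 * P ^ (-q / 2 - 2) := by positivity
  have h₂ : 0 ≤ q * ‖v‖ ^ 2 * P ^ (-q / 2 - 1) := by positivity
  rw [abs_le]
  constructor <;> nlinarith

lemma abs_secondDiff_one_add_norm_sq_rpow_le {A : ℝ} (hq : 0 ≤ q) (hA : 0 < A) {x y : E}
    (hxy : ∀ t ∈ Icc (-1 : ℝ) 1, A ≤ 1 + ‖x + t • y‖ ^ 2) :
    |secondDiff (fun z => (1 + ‖z‖ ^ 2) ^ (-q / 2)) x y|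
      ≤ 2 * (q * (q + 3) * ‖y‖ ^ 2 * A ^ (-q / 2 - 1)) := by
  have hderiv2 : ∀ t, HasDerivAt
      (fun t : ℝ => 2 * (-q / 2) * (⟪x + t • y, y⟫ * (1 + ‖x + t • y‖ ^ 2) ^ (-q / 2 - 1)))
      (q * (q + 2) * ⟪x + t • y, y⟫ ^ 2 * (1 + ‖x + t • y‖ ^ 2) ^ (-q / 2 - 2)
        - q * ‖y‖ ^ 2 * (1 + ‖x + t • y‖ ^ 2) ^ (-q / 2 - 1)) t := fun t =>
    (((hasDerivAt_inner_add_smul x y t).mul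
      (hasDerivAt_one_add_norm_add_smul_sq_rpow x y (-q / 2 - 1) t)).const_mul
        (2 * (-q / 2))).congr_deriv (by rw [show -q / 2 - 1 - 1 = -q / 2 - 2 by ring]; ring)
  have h := abs_secondDiff_le_of_hasDerivAt (M := q * (q + 3) * ‖y‖ ^ 2 * A ^ (-q / 2 - 1))
    (hasDerivAt_one_add_norm_add_smul_sq_rpow x y (-q / 2)) hderiv2 fun t ht =>
      (abs_second_deriv_one_add_norm_sq_rpow_le hq _ y).trans <| mul_le_mul_of_nonneg_left
        (Real.rpow_le_rpow_of_nonpos hA (hxy t ht) (by linarith)) (by positivity)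
  simpa [secondDiff, sub_eq_add_neg] using h

lemma abs_singularIntegrand_le_of_mem_closedBall (hq : 0 ≤ q) (hs0 : 0 < s) {x y : E} {m : ℝ}
    (hm0 : 0 < m) (hm : m ^ 2 = 1 + ‖x‖ ^ 2) (hy : y ∈ closedBall (0 : E) (m / 2)) :
    |singularIntegrand (fun z => (1 + ‖z‖ ^ 2) ^ (-q / 2)) s x y|
      ≤ 2 * (q * (q + 3)) * (m / 2) ^ (-q - 2) * ‖y‖ ^ (2 - ((finrank ℝ E : ℝ) + 2 * s)) := by
  have hp : 0 < (finrank ℝ E : ℝ) + 2 * s := by positivity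
  rcases eq_or_ne y 0 with rfl | hy0
  · simp [singularIntegrand, Real.zero_rpow hp.ne']
    positivity
  have hsegment : ∀ t ∈ Icc (-1 : ℝ) 1, (m / 2) ^ 2 ≤ 1 + ‖x + t • y‖ ^ 2 := fun t ht => by
    have hty : ‖t • y‖ ≤ m / 2 := by
      rw [norm_smul]
      exact (mul_le_of_le_one_left (norm_nonneg y) (abs_le.2 ht)).trans
        (mem_closedBall_zero_iff.1 hy)
    have h4 : 4 * ‖t • y‖ ^ 2 ≤ 1 + ‖x‖ ^ 2 := by
      rw [← hm]; nlinarith [norm_nonneg (t • y)]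
    nlinarith [one_add_norm_sq_le_four_mul h4]
  have hsd := abs_secondDiff_one_add_norm_sq_rpow_le hq (by positivity) hsegment
  have hpow : ((m / 2) ^ 2) ^ (-q / 2 - 1) = (m / 2) ^ (-q - 2) := by
    rw [← Real.rpow_natCast, ← Real.rpow_mul (by positivity)]; ring_nf
  have hny : 0 < ‖y‖ := norm_pos_iff.2 hy0
  rw [singularIntegrand, abs_div, abs_of_pos (Real.rpow_pos_of_pos hny _),
    div_le_iff₀ (Real.rpow_pos_of_pos hny _), Real.rpow_sub hny, Real.rpow_two, ← hpow]
  calc _ ≤ _ := hsd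
    _ = _ := by field_simp

end JapaneseBracket

section Estimates

variable {E : Type*} [NormedAddCommGroup E] [NormedSpace ℝ E] {s : ℝ}

lemma abs_singularIntegrand_le_of_notMem_closedBall {f : E → ℝ} (hf0 : ∀ z, 0 ≤ f z)
    (hs0 : 0 < s) {x y : E} {R : ℝ} (hR : 0 < R) (hy : y ∉ closedBall (0 : E) R) :
    |singularIntegrand f s x y| ≤ R ^ (-((finrank ℝ E : ℝ) + 2 * s)) * (f (x + y) + f (x - y))
        + 2 * f x * ‖y‖ ^ (-((finrank ℝ E : ℝ) + 2 * s)) := by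
  have hyR : R < ‖y‖ := by simpa using hy
  have hpow : ‖y‖ ^ (-((finrank ℝ E : ℝ) + 2 * s)) ≤ R ^ (-((finrank ℝ E : ℝ) + 2 * s)) :=
    Real.rpow_le_rpow_of_nonpos hR hyR.le (by linarith)
  have hfar := mul_le_mul_of_nonneg_left hpow (add_nonneg (hf0 (x + y)) (hf0 (x - y)))
  rw [singularIntegrand, abs_div, abs_of_nonneg (Real.rpow_nonneg (norm_nonneg y) _),
    div_eq_mul_inv, ← Real.rpow_neg (norm_nonneg y)]
  calc _ ≤ (f (x + y) + f (x - y) + 2 * f x) * ‖y‖ ^ (-((finrank ℝ E : ℝ) + 2 * s)) := by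
        gcongr
        exact abs_secondDiff_le_of_nonneg hf0 x y
    _ ≤ _ := by linarith

variable [MeasurableSpace E] [BorelSpace E]

lemma aestronglyMeasurable_singularIntegrand {μ : Measure E} {f : E → ℝ} (hf : Continuous f)
    (s : ℝ) (x : E) : AEStronglyMeasurable (singularIntegrand f s x) μ := by
  have := hf.measurable
  exact (Measurable.div (by unfold secondDiff; fun_prop) (by fun_prop)).aestronglyMeasurable

variable [FiniteDimensional ℝ E] [Nontrivial E] {μ : Measure E} [μ.IsAddHaarMeasure]

lemma integrableOn_compl_closedBall_singularIntegrand_and_setIntegral_abs_le {f : E → ℝ}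
    (hf : Continuous f) (hf0 : ∀ z, 0 ≤ f z) (hfi : Integrable f μ) (hs0 : 0 < s) (x : E)
    {R : ℝ} (hR : 0 < R) :
    IntegrableOn (singularIntegrand f s x) (closedBall 0 R)ᶜ μ ∧
      ∫ y in (closedBall 0 R)ᶜ, |singularIntegrand f s x y| ∂μ
        ≤ R ^ (-((finrank ℝ E : ℝ) + 2 * s)) * (2 * ∫ z, f z ∂μ)
          + 2 * f x * (finrank ℝ E * μ.real (ball 0 1) * (R ^ (-(2 * s)) / (2 * s))) := by
  set d : ℝ := (finrank ℝ E : ℝ)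
  have ha : -(d + 2 * s) < -d := by linarith
  have htrans : Integrable (fun y => f (x + y) + f (x - y)) μ :=
    (hfi.comp_add_left x).add (hfi.comp_sub_left x)
  have htail := integrableOn_compl_closedBall_norm_rpow (μ := μ) ha hR
  obtain ⟨hint, hle⟩ := integrableOn_and_setIntegral_abs_le_of_abs_le
    measurableSet_closedBall.compl (aestronglyMeasurable_singularIntegrand hf s x)
    ((htrans.const_mul _).integrableOn.add (htail.const_mul _))
    fun y hy => abs_singularIntegrand_le_of_notMem_closedBall hf0 hs0 hR hy
  refine ⟨hint, hle.trans ?_⟩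
  have htrans_le : ∫ y in (closedBall 0 R)ᶜ, (f (x + y) + f (x - y)) ∂μ ≤ 2 * ∫ z, f z ∂μ := by
    calc _ ≤ ∫ y, (f (x + y) + f (x - y)) ∂μ :=
          setIntegral_le_integral htrans (.of_forall fun y => add_nonneg (hf0 _) (hf0 _))
      _ = 2 * ∫ z, f z ∂μ := by
          rw [integral_add (hfi.comp_add_left x) (hfi.comp_sub_left x),
            integral_add_left_eq_self f x, integral_sub_left_eq_self f μ x]
          ring
  simp only [Pi.add_apply]
  rw [integral_add (htrans.const_mul _).integrableOn (htail.const_mul _), integral_const_mul,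
    integral_const_mul, setIntegral_compl_closedBall_norm_rpow ha hR,
    show d + -(d + 2 * s) = -(2 * s) by ring, neg_div_neg_eq]
  gcongr

end Estimates

section Main

variable {E : Type*} [NormedAddCommGroup E] [InnerProductSpace ℝ E] [FiniteDimensional ℝ E]
  [Nontrivial E] [MeasurableSpace E] [BorelSpace E] {μ : Measure E} [μ.IsAddHaarMeasure]
  {q s : ℝ}

lemma exists_setIntegral_closedBall_abs_singularIntegrand_le (hq : 0 ≤ q) (hs0 : 0 < s)
    (hs1 : s < 1) : ∃ c, ∀ (x : E) (m : ℝ), 0 < m → m ^ 2 = 1 + ‖x‖ ^ 2 →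
      IntegrableOn (singularIntegrand (fun z => (1 + ‖z‖ ^ 2) ^ (-q / 2)) s x)
        (closedBall 0 (m / 2)) μ ∧
      ∫ y in closedBall 0 (m / 2),
          |singularIntegrand (fun z => (1 + ‖z‖ ^ 2) ^ (-q / 2)) s x y| ∂μ
        ≤ c * m ^ (-(q + 2 * s)) := by
  set d : ℝ := (finrank ℝ E : ℝ)
  set c := 2 * (q * (q + 3)) * (d * μ.real (ball 0 1) / (2 - 2 * s))
  refine ⟨c * 2 ^ (q + 2 * s), fun x m hm0 hm => ?_⟩
  have ha : -d < 2 - (d + 2 * s) := by linarith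
  obtain ⟨hint, hle⟩ := integrableOn_and_setIntegral_abs_le_of_abs_le measurableSet_closedBall
    (aestronglyMeasurable_singularIntegrand (continuous_one_add_norm_sq_rpow q) s x)
    ((integrableOn_closedBall_norm_rpow (μ := μ) ha _).const_mul _)
    fun y hy => abs_singularIntegrand_le_of_mem_closedBall hq hs0 hm0 hm hy
  refine ⟨hint, hle.trans_eq ?_⟩
  have hpow : (m / 2) ^ (-q - 2) * (m / 2) ^ (2 - 2 * s)
      = 2 ^ (q + 2 * s) * m ^ (-(q + 2 * s)) := by
    rw [← Real.rpow_add (by positivity), show -q - 2 + (2 - 2 * s) = -(q + 2 * s) by ring,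
      div_two_rpow hm0, neg_neg]
  rw [integral_const_mul, setIntegral_closedBall_norm_rpow ha (by positivity),
    show d + (2 - (d + 2 * s)) = 2 - 2 * s by ring]
  linear_combination c * hpow

lemma exists_setIntegral_compl_closedBall_abs_singularIntegrand_le
    (hq : (finrank ℝ E : ℝ) < q) (hs0 : 0 < s) :
    ∃ c, ∀ (x : E) (m : ℝ), 0 < m → m ^ 2 = 1 + ‖x‖ ^ 2 →
      IntegrableOn (singularIntegrand (fun z => (1 + ‖z‖ ^ 2) ^ (-q / 2)) s x)
        (closedBall 0 (m / 2))ᶜ μ ∧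
      ∫ y in (closedBall 0 (m / 2))ᶜ,
          |singularIntegrand (fun z => (1 + ‖z‖ ^ 2) ^ (-q / 2)) s x y| ∂μ
        ≤ c * m ^ (-((finrank ℝ E : ℝ) + 2 * s)) := by
  set d : ℝ := (finrank ℝ E : ℝ)
  have hfi : Integrable (fun z : E => (1 + ‖z‖ ^ 2) ^ (-q / 2)) μ :=
    integrable_rpow_neg_one_add_norm_sq hq
  set c₀ := ∫ z, (1 + ‖z‖ ^ 2) ^ (-q / 2) ∂μ
  refine ⟨2 ^ (d + 2 * s) * (2 * c₀) + 2 * (d * μ.real (ball 0 1) * 2 ^ (2 * s) / (2 * s)),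
    fun x m hm0 hm => ?_⟩
  obtain ⟨hint, hle⟩ := integrableOn_compl_closedBall_singularIntegrand_and_setIntegral_abs_le
    (continuous_one_add_norm_sq_rpow q) (fun z => by positivity) hfi hs0 x (half_pos hm0)
  refine ⟨hint, hle.trans ?_⟩
  have hm1 : 1 ≤ m := by nlinarith [norm_nonneg x]
  have hfx : (1 + ‖x‖ ^ 2) ^ (-q / 2) ≤ m ^ (-d) := by
    rw [← hm, ← Real.rpow_natCast, ← Real.rpow_mul hm0.le]
    exact Real.rpow_le_rpow_of_exponent_le hm1 (by push_cast; linarith)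
  have hsplit : m ^ (-(d + 2 * s)) = m ^ (-d) * m ^ (-(2 * s)) := by
    rw [← Real.rpow_add hm0]; ring_nf
  rw [div_two_rpow hm0, div_two_rpow hm0, neg_neg, neg_neg]
  calc _ ≤ 2 ^ (d + 2 * s) * m ^ (-(d + 2 * s)) * (2 * c₀)
        + 2 * m ^ (-d) * (d * μ.real (ball 0 1) * (2 ^ (2 * s) * m ^ (-(2 * s)) / (2 * s))) := by
        gcongr
    _ = _ := by rw [hsplit]; ring

theorem exists_abs_integral_singularIntegrand_one_add_norm_sq_rpow_le
    (hq : (finrank ℝ E : ℝ) < q) (hs0 : 0 < s) (hs1 : s < 1) :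
    ∃ C > (0 : ℝ), ∀ x : E,
      Integrable (singularIntegrand (fun z => (1 + ‖z‖ ^ 2) ^ (-q / 2)) s x) μ ∧
      |∫ y, singularIntegrand (fun z => (1 + ‖z‖ ^ 2) ^ (-q / 2)) s x y ∂μ|
        ≤ C * (1 + ‖x‖ ^ 2) ^ (-((finrank ℝ E : ℝ) + 2 * s) / 2) := by
  set p : ℝ := (finrank ℝ E : ℝ) + 2 * s
  obtain ⟨c₁, hnear⟩ := exists_setIntegral_closedBall_abs_singularIntegrand_le (μ := μ)
    ((Nat.cast_nonneg _).trans hq.le) hs0 hs1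
  obtain ⟨c₂, hfar⟩ := exists_setIntegral_compl_closedBall_abs_singularIntegrand_le (μ := μ) hq hs0
  refine ⟨|c₁| + |c₂| + 1, by positivity, fun x => ?_⟩
  set m := √(1 + ‖x‖ ^ 2)
  have hm0 : 0 < m := Real.sqrt_pos.2 (by positivity)
  have hm : m ^ 2 = 1 + ‖x‖ ^ 2 := Real.sq_sqrt (by positivity)
  have hm1 : 1 ≤ m := Real.one_le_sqrt.2 (by nlinarith [norm_nonneg x])
  obtain ⟨hint₁, hle₁⟩ := hnear x m hm0 hm
  obtain ⟨hint₂, hle₂⟩ := hfar x m hm0 hm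
  have hint := hint₁.union hint₂
  rw [union_compl_self, integrableOn_univ] at hint
  refine ⟨hint, ?_⟩
  have hmp : 0 ≤ m ^ (-p) := by positivity
  have hqp : m ^ (-(q + 2 * s)) ≤ m ^ (-p) := Real.rpow_le_rpow_of_exponent_le hm1 (by linarith)
  have hmx : m ^ (-p) = (1 + ‖x‖ ^ 2) ^ (-p / 2) := by
    rw [← hm, ← Real.rpow_natCast, ← Real.rpow_mul hm0.le]; ring_nf
  calc _ ≤ ∫ y, |singularIntegrand (fun z => (1 + ‖z‖ ^ 2) ^ (-q / 2)) s x y| ∂μ :=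
        abs_integral_le_integral_abs
    _ = _ := (integral_add_compl measurableSet_closedBall hint.abs).symm
    _ ≤ c₁ * m ^ (-(q + 2 * s)) + c₂ * m ^ (-p) := add_le_add hle₁ hle₂
    _ ≤ (|c₁| + |c₂| + 1) * m ^ (-p) := by
        have h₁ := mul_le_mul (le_abs_self c₁) hqp (by positivity) (abs_nonneg _)
        have h₂ := mul_le_mul_of_nonneg_right (le_abs_self c₂) hmp
        nlinarith
    _ = _ := by rw [hmx]

end Main

theorem stmt4 (n : ℕ) (hn : 1 ≤ n) (q : ℝ) (hq : (n : ℝ) < q)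
    (s : ℝ) (hs0 : 0 < s) (hs1 : s < 1) :
    ∃ C > (0 : ℝ), ∀ x : EuclideanSpace ℝ (Fin n),
      Integrable (fun y : EuclideanSpace ℝ (Fin n) =>
        ((1 + ‖x + y‖ ^ 2) ^ (-q / 2) - 2 * (1 + ‖x‖ ^ 2) ^ (-q / 2)
            + (1 + ‖x - y‖ ^ 2) ^ (-q / 2)) / ‖y‖ ^ ((n : ℝ) + 2 * s)) ∧
      |∫ y : EuclideanSpace ℝ (Fin n),
          ((1 + ‖x + y‖ ^ 2) ^ (-q / 2) - 2 * (1 + ‖x‖ ^ 2) ^ (-q / 2)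
              + (1 + ‖x - y‖ ^ 2) ^ (-q / 2)) / ‖y‖ ^ ((n : ℝ) + 2 * s)| ≤
        C * (1 + ‖x‖ ^ 2) ^ (-((n : ℝ) + 2 * s) / 2) := by
  have : Nontrivial (EuclideanSpace ℝ (Fin n)) :=
    Module.nontrivial_of_finrank_pos (R := ℝ) (by rw [finrank_euclideanSpace_fin]; omega)
  have hq' : (finrank ℝ (EuclideanSpace ℝ (Fin n)) : ℝ) < q := by
    rwa [finrank_euclideanSpace_fin]
  have key := exists_abs_integral_singularIntegrand_one_add_norm_sq_rpow_le
    (μ := volume) hq' hs0 hs1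
  unfold singularIntegrand secondDiff at key
  rw [finrank_euclideanSpace_fin] at key
  exact key
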